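/- arXiv:2008.09191 — 3 statements merged into one kernel-verified Lean document; each statement's English description precedes it below -/
import Mathlib

section
/- Every trace-free skew-Hermitian endomorphism of ℂ^r can be written as a commutator of two skew-Hermitian endomorphisms: if u ∈ End(ℂ^r) satisfies u* = -u and Tr(u) = 0, then there exist A, Γ ∈ End(ℂ^r) with A* = -A, Γ* = -Γ, and u = AΓ - ΓA. -/
/-!
Diagonalise `u` by a unitary. Conjugating a diagonal matrix `D` by a unitary whose entries all
have modulus `1 / √r` (the discrete Fourier matrix) yields a matrix with every diagonal entry
equal to `trace D / r`, here `0`. A skew-Hermitian `N` with zero diagonal is `[A, Γ]` for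
`A = diag(i·0, …, i·(r-1))` and `Γ j k = N j k / (i (j - k))`, because `[A, ·]` multiplies the
`(j, k)` entry by `i (j - k)`. Conjugating back, which preserves skew-Hermitian matrices and
commutators, expresses `u` as a commutator.
-/

open Matrix

section Fourier

variable (N : ℕ) [NeZero N]

noncomputable def fourierMatrix : Matrix (ZMod N) (ZMod N) ℂ :=
  of fun j k => (Real.sqrt N : ℂ)⁻¹ * ZMod.stdAddChar (j * k)

lemma fourierMatrix_apply_mul_star (j k l : ZMod N) :
    fourierMatrix N j l * star (fourierMatrix N k l) =
      (N : ℂ)⁻¹ * ZMod.stdAddChar (l * (j - k)) := by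
  have hsqrt : star ((Real.sqrt N : ℂ)⁻¹) * (Real.sqrt N : ℂ)⁻¹ = (N : ℂ)⁻¹ := by
    rw [star_inv₀, Complex.star_def, Complex.conj_ofReal, ← mul_inv, ← Complex.ofReal_mul,
      Real.mul_self_sqrt N.cast_nonneg, Complex.ofReal_natCast]
  simp only [fourierMatrix, of_apply, star_mul', Complex.star_def, ← AddChar.map_neg_eq_conj]
  rw [← Complex.star_def, mul_sub, mul_comm l, mul_comm l, sub_eq_add_neg,
    AddChar.map_add_eq_mul, ← hsqrt]
  ring

lemma star_fourierMatrix_apply_mul_self (j k : ZMod N) :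
    star (fourierMatrix N j k) * fourierMatrix N j k = (N : ℂ)⁻¹ := by
  rw [mul_comm, fourierMatrix_apply_mul_star, sub_self, mul_zero, AddChar.map_zero_eq_one, mul_one]

lemma fourierMatrix_mem_unitaryGroup : fourierMatrix N ∈ unitaryGroup (ZMod N) ℂ := by
  classical
  rw [mem_unitaryGroup_iff]
  ext j k
  simp only [mul_apply, star_apply, fourierMatrix_apply_mul_star, ← Finset.mul_sum,
    AddChar.sum_mulShift _ (ZMod.isPrimitive_stdAddChar N), ZMod.card, sub_eq_zero, one_apply]
  split_ifs <;> simp [NeZero.ne]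

end Fourier

lemma star_map_eq_neg {F R S : Type*} [AddGroup R] [AddGroup S] [Star R] [Star S] [FunLike F R S]
    [AddMonoidHomClass F R S] [StarHomClass F R S] (f : F) {x : R} (hx : star x = -x) :
    star (f x) = -f x := by
  rw [← map_star, hx, map_neg]

variable {n : Type*} [Fintype n] [DecidableEq n]

lemma Matrix.submatrix_mem_unitaryGroup {m α : Type*} [Fintype m] [DecidableEq m] [CommRing α]
    [StarRing α] {U : Matrix m m α} (hU : U ∈ unitaryGroup m α) (e : n ≃ m) :
    U.submatrix e e ∈ unitaryGroup n α := by
  rw [mem_unitaryGroup_iff] at hU ⊢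
  rw [star_eq_conjTranspose, conjTranspose_submatrix, submatrix_mul_equiv,
    ← star_eq_conjTranspose, hU, submatrix_one_equiv]

variable (n) in
theorem exists_unitary_forall_star_apply_mul_self_eq :
    ∃ U : unitaryGroup n ℂ, ∀ i j,
      star ((U : Matrix n n ℂ) i j) * (U : Matrix n n ℂ) i j = (Fintype.card n : ℂ)⁻¹ := by
  cases isEmpty_or_nonempty n
  · exact ⟨1, isEmptyElim⟩
  have : NeZero (Fintype.card n) := ⟨Fintype.card_ne_zero⟩
  let e : n ≃ ZMod (Fintype.card n) := (Fintype.equivFin n).trans (ZMod.finEquiv _).toEquiv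
  exact ⟨⟨_, Matrix.submatrix_mem_unitaryGroup (fourierMatrix_mem_unitaryGroup _) e⟩,
    fun i j => star_fourierMatrix_apply_mul_self _ (e i) (e j)⟩

lemma Matrix.star_mul_diagonal_mul_apply_self {R : Type*}
    [CommSemiring R] [StarRing R] {U : Matrix n n R} {c : R}
    (hU : ∀ i j, star (U i j) * U i j = c) (d : n → R) (k : n) :
    (star U * diagonal d * U) k k = c * ∑ i, d i := by
  rw [mul_apply]
  simp only [mul_diagonal, star_apply, Finset.mul_sum]
  refine Finset.sum_congr rfl fun i _ => ?_
  rw [← hU i k]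
  ring

theorem Matrix.IsHermitian.exists_unitary_conj_apply_self_eq {A : Matrix n n ℂ}
    (hA : A.IsHermitian) :
    ∃ U : unitaryGroup n ℂ, ∀ k,
      Unitary.conjStarAlgAut ℂ _ U A k k = A.trace / Fintype.card n := by
  obtain ⟨F, hF⟩ := exists_unitary_forall_star_apply_mul_self_eq n
  refine ⟨star F * star hA.eigenvectorUnitary, fun k => ?_⟩
  rw [Unitary.conjStarAlgAut_mul_apply, hA.conjStarAlgAut_star_eigenvectorUnitary,
    Unitary.conjStarAlgAut_star_apply, star_mul_diagonal_mul_apply_self hF,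
    hA.trace_eq_sum_eigenvalues, inv_mul_eq_div]
  rfl

theorem exists_unitary_conj_apply_self_eq_zero_of_star_eq_neg {u : Matrix n n ℂ}
    (hu : star u = -u) (htr : u.trace = 0) :
    ∃ U : unitaryGroup n ℂ, ∀ k, Unitary.conjStarAlgAut ℂ _ U u k k = 0 := by
  have hH : (Complex.I • u).IsHermitian := by
    rw [IsHermitian, ← star_eq_conjTranspose, star_smul, hu, Complex.star_def, Complex.conj_I,
      neg_smul, smul_neg, neg_neg]
  obtain ⟨U, hU⟩ := hH.exists_unitary_conj_apply_self_eq
  refine ⟨U, fun k => ?_⟩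
  have := hU k
  rw [map_smul, trace_smul, htr, smul_zero, zero_div, Matrix.smul_apply, smul_eq_mul] at this
  exact (mul_eq_zero.mp this).resolve_left Complex.I_ne_zero

theorem exists_eq_commutator_of_star_eq_neg_of_apply_self_eq_zero {N : Matrix n n ℂ}
    (hN : star N = -N) (hdiag : ∀ k, N k k = 0) :
    ∃ A Γ : Matrix n n ℂ, star A = -A ∧ star Γ = -Γ ∧ N = A * Γ - Γ * A := by
  let w : n → ℂ := fun j => Complex.I * (Fintype.equivFin n j : ℕ)
  have hw_ne : ∀ {j k}, j ≠ k → w j - w k ≠ 0 := by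
    intro j k hjk
    simpa [w, ← mul_sub, sub_eq_zero, Fin.val_inj] using hjk
  have hw_star : ∀ j, star (w j) = -w j := by simp [w]
  refine ⟨diagonal w, of fun j k => N j k / (w j - w k), ?_, ?_, ?_⟩
  · rw [star_eq_conjTranspose, diagonal_conjTranspose, diagonal_neg]
    exact congrArg diagonal (funext hw_star)
  · ext j k
    have hNjk : star (N k j) = - N j k := by
      rw [← star_apply, hN, Matrix.neg_apply]
    simp only [star_apply, of_apply, Matrix.neg_apply, star_div₀, hNjk, star_sub, hw_star]
    ring
  · ext j k
    simp only [Matrix.sub_apply, diagonal_mul, mul_diagonal, of_apply]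
    rcases eq_or_ne j k with rfl | hjk
    · simp [hdiag]
    · field_simp [hw_ne hjk]

/-- Every trace-free skew-Hermitian endomorphism of `ℂ^r` is a commutator
of two skew-Hermitian endomorphisms. -/
theorem traceless_skewHermitian_is_commutator_of_skewHermitian
    (r : ℕ) (u : Matrix (Fin r) (Fin r) ℂ)
    (hu : u.conjTranspose = -u) (htr : u.trace = 0) :
    ∃ A Γ : Matrix (Fin r) (Fin r) ℂ,
      A.conjTranspose = -A ∧ Γ.conjTranspose = -Γ ∧ u = A * Γ - Γ * A := by
  obtain ⟨U, hU⟩ := exists_unitary_conj_apply_self_eq_zero_of_star_eq_neg hu htr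
  set φ := Unitary.conjStarAlgAut ℂ (Matrix (Fin r) (Fin r) ℂ) U
  obtain ⟨A, Γ, hA, hΓ, hcomm⟩ := exists_eq_commutator_of_star_eq_neg_of_apply_self_eq_zero
    (star_map_eq_neg φ hu) hU
  refine ⟨φ.symm A, φ.symm Γ, star_map_eq_neg φ.symm hA, star_map_eq_neg φ.symm hΓ, ?_⟩
  rw [← map_mul, ← map_mul, ← map_sub, ← hcomm, φ.symm_apply_apply]
end

section
/- With respect to the Fischer inner product ⟨P,Q⟩ = ∂(P)(conj Q) on homogeneous polynomials, the adjoint of the multiplication map Φ(Q) = R·Q by a fixed homogeneous polynomial R of degree k (mapping P_m → P_{m+k}) is the constant-coefficient differential operator P ↦ ∂(conj R)P. -/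
open MvPolynomial

/-- The Fischer inner product `⟨P,Q⟩ = ∂(P)(conj Q) = ∑_α α! a_α conj(b_α)`. -/
noncomputable def fischer (n : ℕ) (P Q : MvPolynomial (Fin n) ℂ) : ℂ :=
  ∑ α ∈ P.support ∪ Q.support,
    ((∏ i : Fin n, Nat.factorial (α i) : ℕ) : ℂ) * P.coeff α * (starRingEnd ℂ) (Q.coeff α)

/-- The constant-coefficient differential operator `∂(R) = ∑_α c_α ∂^α` attached to
`R = ∑_α c_α v^α`, applied to `P` (using `∂^α v^β = (∏ᵢ (βᵢ)!/(βᵢ-αᵢ)!) v^{β-α}`). -/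
noncomputable def fischerOp (n : ℕ) (R P : MvPolynomial (Fin n) ℂ) :
    MvPolynomial (Fin n) ℂ :=
  ∑ α ∈ R.support, ∑ β ∈ P.support,
    (monomial (β - α))
      (((∏ i : Fin n, (β i).descFactorial (α i) : ℕ) : ℂ) * R.coeff α * P.coeff β)

/-!
Both sides expand into the same double sum over `α ∈ supp R` and `δ ∈ supp Q`. On the left this
is the monomialwise expansion of `R * Q`. On the right, `∂^α` sends `v^β` to a multiple of
`v^(β - α)`, so the coefficient of `v^δ` in `∂(conj R) P` only involves `β = δ + α`, with weight
`(δ + α)! / δ!`; pairing with `Q` multiplies it by `δ!`, giving the weight `(δ + α)!` of the left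
side.
-/

open Finset
open scoped Nat

theorem Finsupp.prod_factorial_add {σ : Type*} [Fintype σ] (γ α : σ →₀ ℕ) :
    ∏ i, ((γ + α) i)! = (∏ i, (γ i)!) * ∏ i, ((γ + α) i).descFactorial (α i) := by
  rw [← Finset.prod_mul_distrib]
  refine Finset.prod_congr rfl fun i _ => ?_
  rw [Finsupp.add_apply, Nat.add_descFactorial_eq_ascFactorial, Nat.factorial_mul_ascFactorial]

theorem Finsupp.prod_descFactorial_eq_zero_of_not_le {σ : Type*} [Fintype σ] {α β : σ →₀ ℕ}
    (h : ¬α ≤ β) : ∏ i, (β i).descFactorial (α i) = 0 := by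
  obtain ⟨i, hi⟩ : ∃ i, β i < α i := by simpa [Finsupp.le_def] using h
  exact prod_eq_zero (mem_univ i) (Nat.descFactorial_eq_zero_iff_lt.mpr hi)

section

variable {n : ℕ}

theorem fischer_eq_sum_of_subset {X Y : MvPolynomial (Fin n) ℂ} (s : Finset (Fin n →₀ ℕ))
    (hs : X.support ∩ Y.support ⊆ s) :
    fischer n X Y = ∑ α ∈ s,
      ((∏ i, (α i)! : ℕ) : ℂ) * X.coeff α * starRingEnd ℂ (Y.coeff α) := by
  have hzero : ∀ α ∉ X.support ∩ Y.support,
      ((∏ i, (α i)! : ℕ) : ℂ) * X.coeff α * starRingEnd ℂ (Y.coeff α) = 0 := by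
    intro α hα
    rcases not_and_or.mp (mem_inter.not.mp hα) with hX | hY
    · rw [notMem_support_iff.mp hX, mul_zero, zero_mul]
    · rw [notMem_support_iff.mp hY, map_zero, mul_zero]
  rw [fischer, ← sum_subset inter_subset_union fun α _ hα => hzero α hα,
    ← sum_subset hs fun α _ hα => hzero α hα]

theorem fischer_sum_left {ι : Type*} (s : Finset ι) (X : ι → MvPolynomial (Fin n) ℂ)
    (Y : MvPolynomial (Fin n) ℂ) :
    fischer n (∑ j ∈ s, X j) Y = ∑ j ∈ s, fischer n (X j) Y := by
  simp only [fischer_eq_sum_of_subset Y.support inter_subset_right, coeff_sum, mul_sum, sum_mul]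
  exact sum_comm

theorem fischer_monomial_left (γ : Fin n →₀ ℕ) (c : ℂ) (Y : MvPolynomial (Fin n) ℂ) :
    fischer n (monomial γ c) Y = ((∏ i, (γ i)! : ℕ) : ℂ) * c * starRingEnd ℂ (Y.coeff γ) := by
  rw [fischer_eq_sum_of_subset {γ} (inter_subset_left.trans support_monomial_subset),
    sum_singleton, coeff_monomial, if_pos rfl]

theorem fischer_mul_left (R Q P : MvPolynomial (Fin n) ℂ) :
    fischer n (R * Q) P = ∑ α ∈ R.support, ∑ δ ∈ Q.support,
      ((∏ i, ((δ + α) i)! : ℕ) : ℂ) * (R.coeff α * Q.coeff δ)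
        * starRingEnd ℂ (P.coeff (δ + α)) := by
  rw [MvPolynomial.mul_def, Finsupp.sum, fischer_sum_left]
  refine sum_congr rfl fun α _ => ?_
  rw [Finsupp.sum, fischer_sum_left]
  refine sum_congr rfl fun δ _ => ?_
  rw [fischer_monomial_left, add_comm]
  rfl

theorem coeff_fischerOp (R P : MvPolynomial (Fin n) ℂ) (γ : Fin n →₀ ℕ) :
    (fischerOp n R P).coeff γ = ∑ α ∈ R.support,
      ((∏ i, ((γ + α) i).descFactorial (α i) : ℕ) : ℂ) * R.coeff α * P.coeff (γ + α) := by
  simp only [fischerOp, coeff_sum, coeff_monomial]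
  refine sum_congr rfl fun α _ => ?_
  have hterm : ∀ β,
      (if β - α = γ then
        ((∏ i, (β i).descFactorial (α i) : ℕ) : ℂ) * R.coeff α * P.coeff β else 0) =
      if γ + α = β then
        ((∏ i, (β i).descFactorial (α i) : ℕ) : ℂ) * R.coeff α * P.coeff β else 0 := by
    intro β
    -- `β - α` is truncated; when `¬ α ≤ β` the descending factorial kills the term instead.
    by_cases hαβ : α ≤ β
    · exact if_congr ((tsub_eq_iff_eq_add_of_le hαβ).trans eq_comm) rfl rfl
    · rw [Finsupp.prod_descFactorial_eq_zero_of_not_le hαβ, Nat.cast_zero, zero_mul, zero_mul,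
        ite_self, ite_self]
  rw [sum_congr rfl fun β _ => hterm β, sum_ite_eq]
  split_ifs with hγα
  · rfl
  · rw [notMem_support_iff.mp hγα, mul_zero]

end

theorem fischer_adjoint_of_multiplication_general
    (n : ℕ) (R Q P : MvPolynomial (Fin n) ℂ) :
    fischer n (R * Q) P = fischer n Q (fischerOp n (map (starRingEnd ℂ) R) P) := by
  simp only [fischer_mul_left, fischer_eq_sum_of_subset Q.support inter_subset_left,
    coeff_fischerOp, support_map_of_injective R (starRingEnd ℂ).injective, coeff_map, map_sum,
    map_mul, map_natCast, Complex.conj_conj, mul_sum]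
  rw [sum_comm]
  refine sum_congr rfl fun α _ => sum_congr rfl fun δ _ => ?_
  rw [Finsupp.prod_factorial_add]
  push_cast
  ring

/-- With respect to the Fischer inner product, the adjoint of multiplication
by a fixed homogeneous polynomial `R` of degree `k` (mapping `P_m → P_{m+k}`) is the
constant-coefficient differential operator `P ↦ ∂(conj R) P`. -/
theorem fischer_adjoint_of_multiplication
    (n k m : ℕ) (R Q P : MvPolynomial (Fin n) ℂ)
    (hR : R.IsHomogeneous k) (hQ : Q.IsHomogeneous m) (hP : P.IsHomogeneous (m + k)) :
    fischer n (R * Q) P = fischer n Q (fischerOp n (map (starRingEnd ℂ) R) P) :=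
  fischer_adjoint_of_multiplication_general n R Q P
end

section
/- If u is a section of the endomorphism bundle End(E) that is parallel along the flow (∇^{End(E)}_X u = 0) and pointwise self-adjoint (u* = u), and if the flow has a dense orbit on the compact manifold, then the distinct eigenvalues λ₁,...,λ_k of u(x) are constant over the whole manifold, u = Σᵢ λᵢ Πᵢ where Πᵢ is the spectral projection onto the λᵢ-eigenbundle, and each Πᵢ satisfies ∇^{End(E)}_X Πᵢ = 0. -/
/-!
Parallel transport is by isometries, so `u (φ t x₀)` is unitarily conjugate to `u x₀` for every
`t`. The unitary group of the finite-dimensional C⋆-algebra `End H` is compact, so the unitary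
orbit of `u x₀` is closed; by density of the orbit of `x₀` and continuity of `u`, every `u x`
lies in it. Hence all `u x` have the spectrum of `u x₀`, which is a finite set of reals, and the
spectral theorem writes `u x` as the sum of these eigenvalues times the orthogonal projections
onto its eigenspaces. Those eigenspaces are transported onto each other by the parallel
transport, and so are the projections.
-/

open Module.End

lemma isCompact_unitary {A : Type*} [NormedRing A] [StarRing A] [CStarRing A] [ProperSpace A] :
    IsCompact (unitary A : Set A) :=
  (isCompact_closedBall 0 ‖(1 : A)‖).of_isClosed_subset isClosed_unitary fun U hU => by
    simpa using (CStarRing.norm_mul_mem_unitary 1 hU).le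

namespace LinearIsometryEquiv

variable {𝕜 H : Type*} [RCLike 𝕜] [NormedAddCommGroup H] [InnerProductSpace 𝕜 H] [CompleteSpace H]

lemma isClosed_range_conjStarAlgEquiv_apply [FiniteDimensional 𝕜 H] (T : H →L[𝕜] H) :
    IsClosed (Set.range fun W : H ≃ₗᵢ[𝕜] H => W.conjStarAlgEquiv T) := by
  have := FiniteDimensional.proper_rclike 𝕜 (H →L[𝕜] H)
  have : CompactSpace (unitary (H →L[𝕜] H)) := isCompact_iff_compactSpace.1 isCompact_unitary
  rw [← Unitary.linearIsometryEquiv.surjective.range_comp]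
  exact (isCompact_range (by fun_prop :
    Continuous fun U : unitary (H →L[𝕜] H) => (U : H →L[𝕜] H) * T * star (U : H →L[𝕜] H))).isClosed

lemma spectrum_conjStarAlgEquiv_apply (W : H ≃ₗᵢ[𝕜] H) (T : H →L[𝕜] H) :
    spectrum 𝕜 (W.conjStarAlgEquiv T) = spectrum 𝕜 T :=
  AlgEquiv.spectrum_eq W.conjStarAlgEquiv T

lemma eigenspace_conjStarAlgEquiv_apply (W : H ≃ₗᵢ[𝕜] H) (T : H →L[𝕜] H) (μ : 𝕜) :
    eigenspace (W.conjStarAlgEquiv T : H →ₗ[𝕜] H) μ =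
      (eigenspace (T : H →ₗ[𝕜] H) μ).map (W.toLinearEquiv : H →ₗ[𝕜] H) := by
  ext v
  rw [Submodule.mem_map_equiv, mem_eigenspace_iff, mem_eigenspace_iff, ContinuousLinearMap.coe_coe,
    ContinuousLinearMap.coe_coe, conjStarAlgEquiv_apply_apply, ← W.symm.injective.eq_iff,
    symm_apply_apply, map_smul]
  rfl

lemma starProjection_eigenspace_conjStarAlgEquiv_apply_apply [FiniteDimensional 𝕜 H]
    (W : H ≃ₗᵢ[𝕜] H) (T : H →L[𝕜] H) (μ : 𝕜) (v : H) :
    (eigenspace (W.conjStarAlgEquiv T : H →ₗ[𝕜] H) μ).starProjection (W v) =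
      W ((eigenspace (T : H →ₗ[𝕜] H) μ).starProjection v) := by
  simp only [eigenspace_conjStarAlgEquiv_apply, Submodule.starProjection_map_apply,
    symm_apply_apply]

end LinearIsometryEquiv

lemma ContinuousLinearMap.eq_sum_smul_starProjection_eigenspace {𝕜 H ι : Type*} [RCLike 𝕜]
    [NormedAddCommGroup H] [InnerProductSpace 𝕜 H] [FiniteDimensional 𝕜 H] [Fintype ι]
    {T : H →L[𝕜] H} (hT : (T : H →ₗ[𝕜] H).IsSymmetric) {lam : ι → 𝕜}
    (hlam : Function.Injective lam)
    (hcover : ∀ μ, HasEigenvalue (T : H →ₗ[𝕜] H) μ → μ ∈ Set.range lam) :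
    T = ∑ i, lam i • (eigenspace (T : H →ₗ[𝕜] H) (lam i)).starProjection := by
  set V := fun i => eigenspace (T : H →ₗ[𝕜] H) (lam i)
  have hV : ⨆ i, V i = ⊤ := by
    have hall : ⨆ μ, eigenspace (T : H →ₗ[𝕜] H) μ = ⊤ :=
      Submodule.orthogonal_eq_bot_iff.1 hT.orthogonalComplement_iSup_eigenspaces_eq_bot
    refine top_le_iff.1 (hall ▸ iSup_le fun μ => ?_)
    by_cases hμ : HasEigenvalue (T : H →ₗ[𝕜] H) μ
    · obtain ⟨i, rfl⟩ := hcover μ hμ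
      exact le_iSup V i
    · rw [hasEigenvalue_iff, not_not] at hμ
      exact hμ ▸ bot_le
  ext v
  calc T v = T (∑ i, (V i).starProjection v) := by
        rw [(hT.orthogonalFamily_eigenspaces.comp hlam).sum_projection_of_mem_iSup v
          (hV ▸ Submodule.mem_top)]
    _ = _ := by
      simp only [map_sum, sum_apply, smul_apply]
      refine Finset.sum_congr rfl fun i _ => ?_
      exact mem_eigenspace_iff.1 ((V i).starProjection_apply_mem v)

theorem parallel_selfadjoint_section_spectral_decomposition_general
    {M H : Type*} [TopologicalSpace M]
    [NormedAddCommGroup H] [InnerProductSpace ℂ H] [FiniteDimensional ℂ H]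
    (φ : ℝ → M → M)
    (C : M → ℝ → (H ≃ₗᵢ[ℂ] H))
    (x₀ : M) (hx₀ : Dense (Set.range fun t : ℝ => φ t x₀))
    (u : M → (H →L[ℂ] H)) (hu : Continuous u)
    (hsa : ∀ x, IsSelfAdjoint (u x))
    (hpar : ∀ (x : M) (t : ℝ) (h : H), u (φ t x) (C x t h) = C x t (u x h)) :
    ∃ (k : ℕ) (lam : Fin k → ℝ) (P : Fin k → M → (H →L[ℂ] H)),
      Function.Injective lam ∧
      (∀ x, u x = ∑ i, (lam i : ℂ) • P i x) ∧
      (∀ i x, IsSelfAdjoint (P i x) ∧ P i x ∘L P i x = P i x ∧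
        LinearMap.range (↑(P i x) : H →ₗ[ℂ] H) = Module.End.eigenspace (↑(u x) : H →ₗ[ℂ] H) (lam i)) ∧
      (∀ (i : Fin k) (x : M) (t : ℝ) (h : H), P i (φ t x) (C x t h) = C x t (P i x h)) ∧
      (∀ x, spectrum ℂ (u x) = Set.range fun i => (lam i : ℂ)) := by
  have hconj : ∀ x t, u (φ t x) = (C x t).conjStarAlgEquiv (u x) := fun x t => by
    ext v
    simpa using hpar x t ((C x t).symm v)
  have horbit : ∀ x, u x ∈ Set.range fun W : H ≃ₗᵢ[ℂ] H => W.conjStarAlgEquiv (u x₀) :=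
    fun x => DenseRange.induction_on hx₀ (p := fun x => u x ∈ _) x
      ((LinearIsometryEquiv.isClosed_range_conjStarAlgEquiv_apply _).preimage hu)
      fun t => ⟨C x₀ t, (hconj x₀ t).symm⟩
  have hspec : ∀ x, spectrum ℂ (u x) = spectrum ℂ (u x₀) := fun x => by
    obtain ⟨W, hW⟩ := horbit x
    rw [← hW, LinearIsometryEquiv.spectrum_conjStarAlgEquiv_apply]
  have hfin : ((↑) ⁻¹' spectrum ℂ (u x₀) : Set ℝ).Finite := by
    rw [ContinuousLinearMap.spectrum_eq]
    exact (Module.End.finite_spectrum _).preimage Complex.ofReal_injective.injOn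
  set lam := hfin.toFinset.orderEmbOfFin rfl
  have hlam : (Set.range fun i => (lam i : ℂ)) = spectrum ℂ (u x₀) := by
    rw [Set.range_comp', Finset.range_orderEmbOfFin, hfin.coe_toFinset]
    exact Set.image_preimage_eq_of_subset fun z hz => ⟨z.re, ((hsa x₀).mem_spectrum_eq_re hz).symm⟩
  refine ⟨_, lam, fun i x => (eigenspace (u x : H →ₗ[ℂ] H) (lam i)).starProjection, lam.injective,
    fun x => ?_, fun i x => ?_, fun i x t v => ?_, fun x => (hspec x).trans hlam.symm⟩
  · refine ContinuousLinearMap.eq_sum_smul_starProjection_eigenspace (hsa x).isSymmetric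
      (Complex.ofReal_injective.comp lam.injective) fun μ hμ => ?_
    rw [hlam, ← hspec, ContinuousLinearMap.spectrum_eq]
    exact hμ.mem_spectrum
  · exact ⟨isSelfAdjoint_starProjection _, Submodule.isIdempotentElem_starProjection _,
      Submodule.range_starProjection _⟩
  · dsimp only
    rw [hconj, LinearIsometryEquiv.starProjection_eigenspace_conjStarAlgEquiv_apply_apply]

/-- If `u` is a section of `End(E)` parallel along a flow with a dense orbit
on a compact manifold, and pointwise self-adjoint, then the distinct eigenvalues
`λ₁, …, λ_k` of `u(x)` are constant over the manifold, `u = ∑ᵢ λᵢ Πᵢ` where `Πᵢ(x)` is the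
orthogonal (spectral) projection onto the `λᵢ`-eigenspace of `u(x)`, and each `Πᵢ` is itself
parallel along the flow. -/
theorem parallel_selfadjoint_section_spectral_decomposition
    {M H : Type*} [TopologicalSpace M] [CompactSpace M]
    [NormedAddCommGroup H] [InnerProductSpace ℂ H] [FiniteDimensional ℂ H]
    (φ : ℝ → M → M) (hφ0 : φ 0 = id)
    (hφ : ∀ s t : ℝ, φ (s + t) = φ s ∘ φ t)
    (C : M → ℝ → (H ≃ₗᵢ[ℂ] H))
    (hC0 : ∀ x, C x 0 = LinearIsometryEquiv.refl ℂ H)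
    (hCcoc : ∀ (x : M) (s t : ℝ) (v : H), C x (s + t) v = C (φ t x) s (C x t v))
    (x₀ : M) (hx₀ : Dense (Set.range fun t : ℝ => φ t x₀))
    (u : M → (H →L[ℂ] H)) (hu : Continuous u)
    (hsa : ∀ x, IsSelfAdjoint (u x))
    (hpar : ∀ (x : M) (t : ℝ) (h : H), u (φ t x) (C x t h) = C x t (u x h)) :
    ∃ (k : ℕ) (lam : Fin k → ℝ) (P : Fin k → M → (H →L[ℂ] H)),
      Function.Injective lam ∧
      (∀ x, u x = ∑ i, (lam i : ℂ) • P i x) ∧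
      (∀ i x, IsSelfAdjoint (P i x) ∧ P i x ∘L P i x = P i x ∧
        LinearMap.range (↑(P i x) : H →ₗ[ℂ] H) = Module.End.eigenspace (↑(u x) : H →ₗ[ℂ] H) (lam i)) ∧
      (∀ (i : Fin k) (x : M) (t : ℝ) (h : H), P i (φ t x) (C x t h) = C x t (P i x h)) ∧
      (∀ x, spectrum ℂ (u x) = Set.range fun i => (lam i : ℂ)) :=
  parallel_selfadjoint_section_spectral_decomposition_general φ C x₀ hx₀ u hu hsa hpar
end
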